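/- arXiv:1106.2579 — 7 statements merged into one kernel-verified Lean document; each statement's English description precedes it below -/
import Mathlib

section
/- Let N be a bounded normal operator in a Krein space (H,[·,·]) (i.e. N commutes with its Krein adjoint N⁺ = J N* J). The set σ₊(N) of spectral points of positive type is open in the approximate point spectrum σ_ap(N): if λ ∈ σ₊(N), there is ε > 0 such that every μ ∈ σ_ap(N) with |μ - λ| < ε belongs to σ₊(N). -/
open Filter Topology ContinuousLinearMap

noncomputable section

variable {H : Type*} [NormedAddCommGroup H] [InnerProductSpace ℂ H] [CompleteSpace H]

def kadj (J T : H →L[ℂ] H) : H →L[ℂ] H := J ∘L (ContinuousLinearMap.adjoint T) ∘L J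

def ApproxEig (T : H →L[ℂ] H) (l : ℂ) (x : ℕ → H) : Prop :=
  (∀ n, ‖x n‖ = 1) ∧ Tendsto (fun n => T (x n) - l • x n) atTop (nhds 0)

def approxSpec (T : H →L[ℂ] H) : Set ℂ := {l | ∃ x : ℕ → H, ApproxEig T l x}

def posType (J T : H →L[ℂ] H) : Set ℂ :=
  {l | l ∈ approxSpec T ∧ ∀ x : ℕ → H, ApproxEig T l x →
      0 < Filter.liminf (fun n => (inner ℂ (J (x n)) (x n) : ℂ).re) Filter.atTop}

/-!
If `l` is of positive type, the form `x ↦ [x, x]` is bounded below by some `δ > 0` on all unit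
vectors with `‖(N - l) x‖ < δ`: otherwise a diagonal choice over `δ = 1/(k+1)` gives an approximate
eigensequence for `l` whose `liminf [x_k, x_k]` is `≤ 0`. Approximate eigenvectors for any `μ` with
`|μ - l| < δ` eventually satisfy `‖(N - l) x‖ < δ`, so `μ` is of positive type as well.
-/

section

variable {E : Type*} [NormedAddCommGroup E] [InnerProductSpace ℂ E]

lemma abs_re_inner_apply_le_opNorm (T : E →L[ℂ] E) {x : E} (hx : ‖x‖ = 1) :
    |(inner ℂ (T x) x).re| ≤ ‖T‖ := by
  simpa [rayleighQuotient, reApplyInnerSelf_apply, hx] using T.rayleighQuotient_le_norm x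

lemma isBoundedUnder_le_re_inner_apply {ι : Type*} (T : E →L[ℂ] E) {x : ι → E} (f : Filter ι)
    (hx : ∀ i, ‖x i‖ = 1) :
    f.IsBoundedUnder (· ≤ ·) fun i => (inner ℂ (T (x i)) (x i)).re :=
  isBoundedUnder_of ⟨‖T‖, fun i => (abs_le.1 (abs_re_inner_apply_le_opNorm T (hx i))).2⟩

lemma isBoundedUnder_ge_re_inner_apply {ι : Type*} (T : E →L[ℂ] E) {x : ι → E} (f : Filter ι)
    (hx : ∀ i, ‖x i‖ = 1) :
    f.IsBoundedUnder (· ≥ ·) fun i => (inner ℂ (T (x i)) (x i)).re :=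
  isBoundedUnder_of ⟨-‖T‖, fun i => (abs_le.1 (abs_re_inner_apply_le_opNorm T (hx i))).1⟩

lemma ApproxEig.eventually_norm_sub_smul_lt {T : E →L[ℂ] E} {μ : ℂ} {x : ℕ → E}
    (hx : ApproxEig T μ x) {l : ℂ} {δ : ℝ} (hμl : ‖μ - l‖ < δ) :
    ∀ᶠ n in atTop, ‖T (x n) - l • x n‖ < δ := by
  have hsmall : ∀ᶠ n in atTop, ‖T (x n) - μ • x n‖ < δ - ‖μ - l‖ :=
    (tendsto_zero_iff_norm_tendsto_zero.1 hx.2).eventually (gt_mem_nhds (by linarith))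
  filter_upwards [hsmall] with n hn
  calc ‖T (x n) - l • x n‖ = ‖(T (x n) - μ • x n) + (μ - l) • x n‖ := by
        rw [sub_smul]; abel_nf
    _ ≤ ‖T (x n) - μ • x n‖ + ‖μ - l‖ := by
        grw [norm_add_le, norm_smul, hx.1 n, mul_one]
    _ < δ := by linarith

lemma exists_le_re_inner_of_mem_posType {J T : E →L[ℂ] E} {l : ℂ} (hl : l ∈ posType J T) :
    ∃ δ > 0, ∀ x : E, ‖x‖ = 1 → ‖T x - l • x‖ < δ → δ ≤ (inner ℂ (J x) x).re := by
  by_contra! h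
  choose y hy_norm hy_eig hy_form using fun k : ℕ => h (1 / (k + 1)) Nat.one_div_pos_of_nat
  have hy : ApproxEig T l y := ⟨hy_norm, tendsto_zero_iff_norm_tendsto_zero.2 <|
    squeeze_zero (fun _ => norm_nonneg _) (fun k => (hy_eig k).le)
      tendsto_one_div_add_atTop_nhds_zero_nat⟩
  set c := liminf (fun k => (inner ℂ (J (y k)) (y k)).re) atTop
  have hc : 0 < c := hl.2 y hy
  have hform_large : ∀ᶠ k in atTop, c / 2 < (inner ℂ (J (y k)) (y k)).re :=
    eventually_lt_of_lt_liminf (half_lt_self hc) (isBoundedUnder_ge_re_inner_apply J _ hy_norm)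
  have hbound_small : ∀ᶠ k : ℕ in atTop, 1 / ((k : ℝ) + 1) < c / 2 :=
    tendsto_one_div_add_atTop_nhds_zero_nat.eventually (gt_mem_nhds (half_pos hc))
  obtain ⟨k, hk_large, hk_small⟩ := (hform_large.and hbound_small).exists
  linarith [hy_form k]

end

theorem posType_isOpen_in_approxSpec_general (J N : H →L[ℂ] H)
    (l : ℂ) (hl : l ∈ posType J N) :
    ∃ ε > 0, ∀ μ ∈ approxSpec N, ‖μ - l‖ < ε → μ ∈ posType J N := by
  obtain ⟨δ, hδ, hform⟩ := exists_le_re_inner_of_mem_posType hl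
  refine ⟨δ, hδ, fun μ hμ hμl => ⟨hμ, fun x hx => hδ.trans_le ?_⟩⟩
  refine le_liminf_of_le (isBoundedUnder_le_re_inner_apply J _ hx.1).isCoboundedUnder_ge ?_
  filter_upwards [hx.eventually_norm_sub_smul_lt hμl] with n hn
  exact hform (x n) (hx.1 n) hn

theorem posType_isOpen_in_approxSpec (J N : H →L[ℂ] H)
    (hJ : ContinuousLinearMap.adjoint J = J) (hJ2 : J ∘L J = 1)
    (hN : N ∘L kadj J N = kadj J N ∘L N)
    (l : ℂ) (hl : l ∈ posType J N) :
    ∃ ε > 0, ∀ μ ∈ approxSpec N, ‖μ - l‖ < ε → μ ∈ posType J N :=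
  posType_isOpen_in_approxSpec_general J N l hl
end
end

section
/- Let N be a bounded normal operator in a Krein space and Q a bounded projection on H such that every bounded operator B commuting with N also commutes with Q. Then Q is normal with respect to the Krein adjoint, i.e. Q Q⁺ = Q⁺ Q where Q⁺ = J Q* J. -/
open Filter Topology ContinuousLinearMap

noncomputable section

variable {H : Type*} [NormedAddCommGroup H] [InnerProductSpace ℂ H] [CompleteSpace H]

section KreinAdjoint

variable {J : H →L[ℂ] H}

lemma kadj_comp (hJ2 : J ∘L J = 1) (A B : H →L[ℂ] H) :
    kadj J (A ∘L B) = kadj J B ∘L kadj J A := by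
  ext x
  simp [kadj, adjoint_comp, ← comp_apply J J, hJ2]

lemma kadj_kadj (hJ : adjoint J = J) (hJ2 : J ∘L J = 1) (T : H →L[ℂ] H) :
    kadj J (kadj J T) = T := by
  ext x
  simp [kadj, adjoint_comp, hJ, ← comp_apply J J, hJ2]

lemma kadj_comp_comm_of_comp_comm (hJ2 : J ∘L J = 1) {A B : H →L[ℂ] H}
    (h : A ∘L B = B ∘L A) : kadj J B ∘L kadj J A = kadj J A ∘L kadj J B := by
  rw [← kadj_comp hJ2, ← kadj_comp hJ2, h]

end KreinAdjoint

theorem proj_normal_general (J N Q : H →L[ℂ] H)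
    (hJ : ContinuousLinearMap.adjoint J = J) (hJ2 : J ∘L J = 1)
    (hN : N ∘L kadj J N = kadj J N ∘L N)
    (hcomm : ∀ B : H →L[ℂ] H, N ∘L B = B ∘L N → Q ∘L B = B ∘L Q) :
    Q ∘L kadj J Q = kadj J Q ∘L Q := by
  have hQ_kadjN : Q ∘L kadj J N = kadj J N ∘L Q := hcomm _ hN
  have hN_kadjQ : N ∘L kadj J Q = kadj J Q ∘L N := by
    simpa only [kadj_kadj hJ hJ2] using kadj_comp_comm_of_comp_comm hJ2 hQ_kadjN
  exact hcomm _ hN_kadjQ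

theorem proj_normal (J N Q : H →L[ℂ] H)
    (hJ : ContinuousLinearMap.adjoint J = J) (hJ2 : J ∘L J = 1)
    (hN : N ∘L kadj J N = kadj J N ∘L N)
    (hQ : Q ∘L Q = Q)
    (hcomm : ∀ B : H →L[ℂ] H, N ∘L B = B ∘L N → Q ∘L B = B ∘L Q) :
    Q ∘L kadj J Q = kadj J Q ∘L Q :=
  proj_normal_general J N Q hJ hJ2 hN hcomm
end
end

section
/- Let N be a bounded normal operator in a Krein space and Q a bounded projection commuting with every operator that commutes with N. If the range of Q is uniformly positive (there is δ > 0 with [x,x] ≥ δ‖x‖² for all x ∈ ran Q), then Q is selfadjoint in the Krein space, i.e. Q⁺ = Q. -/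
open Filter Topology ContinuousLinearMap

noncomputable section

variable {H : Type*} [NormedAddCommGroup H] [InnerProductSpace ℂ H] [CompleteSpace H]

/-!
Write `P = Q⁺`. Since `N⁺` commutes with `N`, `Q` commutes with `N⁺`; taking Krein adjoints, `P`
commutes with `N`, hence `Q` commutes with `P`. For any `x`, the vector `y = Qx - PQx` then lies in
`ran Q` and satisfies `Py = 0`, so `[y, y] = [Qy, y] = [y, Py] = 0`, and uniform positivity of
`ran Q` forces `y = 0`. Thus `PQ = Q`, and applying `⁺` gives `Q⁺ = (PQ)⁺ = PQ = Q`.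
-/

lemma apply_apply_of_comp_self_eq_one {E : Type*} [NormedAddCommGroup E] [InnerProductSpace ℂ E]
    {J : E →L[ℂ] E} (hJ2 : J ∘L J = 1) (x : E) : J (J x) = x :=
  DFunLike.congr_fun hJ2 x

section KreinAdjoint

variable {J : H →L[ℂ] H}

lemma kadj_comp_comm (hJ2 : J ∘L J = 1) {A B : H →L[ℂ] H} (h : A ∘L B = B ∘L A) :
    kadj J A ∘L kadj J B = kadj J B ∘L kadj J A := by
  rw [← kadj_comp hJ2, ← kadj_comp hJ2, h]

lemma kadj_idempotent (hJ2 : J ∘L J = 1) {Q : H →L[ℂ] H} (hQ : Q ∘L Q = Q) :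
    kadj J Q ∘L kadj J Q = kadj J Q := by
  rw [← kadj_comp hJ2, hQ]

lemma inner_apply_left_of_adjoint_eq_self (hJ : adjoint J = J) (x y : H) :
    inner ℂ (J x) y = inner ℂ x (J y) := by
  rw [← adjoint_inner_left, hJ]

lemma inner_apply_kadj (hJ : adjoint J = J) (hJ2 : J ∘L J = 1) (T : H →L[ℂ] H) (x y : H) :
    inner ℂ (J (T x)) y = inner ℂ (J x) (kadj J T y) := by
  calc inner ℂ (J (T x)) y = inner ℂ x (adjoint T (J y)) := by
        rw [inner_apply_left_of_adjoint_eq_self hJ, adjoint_inner_right]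
    _ = inner ℂ (J x) (kadj J T y) := by
        rw [inner_apply_left_of_adjoint_eq_self hJ, kadj, comp_apply, comp_apply,
          apply_apply_of_comp_self_eq_one hJ2]

lemma kadj_comp_eq_self_of_commute (hJ : adjoint J = J) (hJ2 : J ∘L J = 1)
    {Q : H →L[ℂ] H} (hQ : Q ∘L Q = Q) (hcomm : Q ∘L kadj J Q = kadj J Q ∘L Q)
    (hdef : ∀ y ∈ Set.range Q, inner ℂ (J y) y = 0 → y = 0) :
    kadj J Q ∘L Q = Q := by
  ext x
  set P := kadj J Q
  set y := Q x - P (Q x)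
  have hQx : Q (Q x) = Q x := DFunLike.congr_fun hQ x
  have hQy : Q y = y := by
    have hQPQx : Q (P (Q x)) = P (Q (Q x)) := DFunLike.congr_fun hcomm (Q x)
    simp only [y, map_sub, hQx, hQPQx]
  have hPy : P y = 0 := by
    have hPPQx : P (P (Q x)) = P (Q x) := DFunLike.congr_fun (kadj_idempotent hJ2 hQ) (Q x)
    simp only [y, map_sub, hPPQx, sub_self]
  have hneutral : inner ℂ (J y) y = 0 :=
    calc inner ℂ (J y) y = inner ℂ (J (Q y)) y := by rw [hQy]
      _ = inner ℂ (J y) (P y) := inner_apply_kadj hJ hJ2 Q y y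
      _ = 0 := by rw [hPy, inner_zero_right]
  exact (sub_eq_zero.mp (hdef y ⟨y, hQy⟩ hneutral)).symm

lemma kadj_eq_self_of_commute (hJ : adjoint J = J) (hJ2 : J ∘L J = 1)
    {Q : H →L[ℂ] H} (hQ : Q ∘L Q = Q) (hcomm : Q ∘L kadj J Q = kadj J Q ∘L Q)
    (hdef : ∀ y ∈ Set.range Q, inner ℂ (J y) y = 0 → y = 0) :
    kadj J Q = Q := by
  have hPQ := kadj_comp_eq_self_of_commute hJ hJ2 hQ hcomm hdef
  calc kadj J Q = kadj J (kadj J Q ∘L Q) := by rw [hPQ]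
    _ = kadj J Q ∘L Q := by rw [kadj_comp hJ2, kadj_kadj hJ hJ2]
    _ = Q := hPQ

end KreinAdjoint

lemma eq_zero_of_inner_self_eq_zero_of_uniformlyPositive {E : Type*} [NormedAddCommGroup E]
    [InnerProductSpace ℂ E] {J : E →L[ℂ] E} {S : Set E} {δ : ℝ} (hδ : 0 < δ)
    (hpos : ∀ x ∈ S, δ * ‖x‖ ^ 2 ≤ (inner ℂ (J x) x : ℂ).re)
    {x : E} (hx : x ∈ S) (h0 : inner ℂ (J x) x = 0) : x = 0 := by
  have hle := hpos x hx
  rw [h0, Complex.zero_re] at hle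
  have hsq : ‖x‖ ^ 2 = 0 := le_antisymm (nonpos_of_mul_nonpos_right hle hδ) (sq_nonneg _)
  simpa using hsq

theorem proj_selfadjoint_of_uniformlyPositive (J N Q : H →L[ℂ] H)
    (hJ : ContinuousLinearMap.adjoint J = J) (hJ2 : J ∘L J = 1)
    (hN : N ∘L kadj J N = kadj J N ∘L N)
    (hQ : Q ∘L Q = Q)
    (hcomm : ∀ B : H →L[ℂ] H, N ∘L B = B ∘L N → Q ∘L B = B ∘L Q)
    (δ : ℝ) (hδ : 0 < δ)
    (hpos : ∀ x ∈ Set.range Q, δ * ‖x‖ ^ 2 ≤ (inner ℂ (J x) x : ℂ).re) :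
    kadj J Q = Q := by
  have hQN : Q ∘L kadj J N = kadj J N ∘L Q := hcomm _ hN
  have hNQ : N ∘L kadj J Q = kadj J Q ∘L N := by
    simpa only [kadj_kadj hJ hJ2] using (kadj_comp_comm hJ2 hQN).symm
  exact kadj_eq_self_of_commute hJ hJ2 hQ (hcomm _ hNQ) fun _ hy =>
    eq_zero_of_inner_self_eq_zero_of_uniformlyPositive hδ hpos hy
end
end

section
/- Let N be a bounded normal operator in a Krein space and let λ ∈ σ₊(N) be a spectral point of positive type. Then every approximate eigensequence for N - λ is also an approximate eigensequence for N⁺ - λ̄: if ‖x_n‖ = 1 and (N - λ)x_n → 0, then (N⁺ - λ̄)x_n → 0. -/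
open Filter Topology ContinuousLinearMap

noncomputable section

variable {H : Type*} [NormedAddCommGroup H] [InnerProductSpace ℂ H] [CompleteSpace H]

/-!
Put `A = N - λ` and `B = N⁺ - λ̄ = J A* J`; normality makes `A` and `B` commute, and `J² = 1`
gives `[B v, B v] = ⟨A* J v, B v⟩ = [v, A B v] = [v, B A v]`. So if `B x_n` did not tend to `0`,
a subsequence of the normalised vectors `z_k = B x_k / ‖B x_k‖` (with `‖B x_k‖ ≥ ε`) would be an
approximate eigensequence of `N` at `λ`, since `A z_k = B A x_k / ‖B x_k‖ → 0`, whose Krein norms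
`[z_k, z_k] = [x_k, B A x_k] / ‖B x_k‖²` tend to `0`, contradicting that `λ` is of positive type.
-/
section Normed

variable {α E F : Type*} [SeminormedAddCommGroup E] [SeminormedAddCommGroup F] [NormedSpace ℝ F]

theorem exists_strictMono_le_norm_of_not_tendsto_zero {y : ℕ → E}
    (hy : ¬Tendsto y atTop (𝓝 0)) : ∃ ε > 0, ∃ φ : ℕ → ℕ, StrictMono φ ∧ ∀ k, ε ≤ ‖y (φ k)‖ := by
  rw [Metric.tendsto_atTop] at hy
  push Not at hy
  obtain ⟨ε, hε, hy⟩ := hy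
  have hfreq : ∃ᶠ n in atTop, ε ≤ ‖y n‖ :=
    frequently_atTop.mpr fun a => by simpa only [dist_zero_right] using hy a
  exact ⟨ε, hε, extraction_of_frequently_atTop hfreq⟩

theorem tendsto_inv_smul_zero_of_forall_le {l : Filter α} {c : α → ℝ} {f : α → F} {ε : ℝ}
    (hε : 0 < ε) (hc : ∀ a, ε ≤ c a) (hf : Tendsto f l (𝓝 0)) :
    Tendsto (fun a => (c a)⁻¹ • f a) l (𝓝 0) := by
  refine IsBoundedUnder.smul_tendsto_zero ⟨ε⁻¹, eventually_map.mpr (.of_forall fun a => ?_)⟩ hf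
  have hca : 0 < c a := hε.trans_le (hc a)
  simpa only [Function.comp_apply, Real.norm_eq_abs, abs_inv, abs_of_pos hca]
    using inv_anti₀ hε (hc a)

theorem tendsto_inner_zero_of_norm_le {𝕜 : Type*} [RCLike 𝕜] [InnerProductSpace 𝕜 E]
    {l : Filter α} {u w : α → E} {C : ℝ}
    (hu : ∀ a, ‖u a‖ ≤ C) (hw : Tendsto w l (𝓝 0)) :
    Tendsto (fun a => inner 𝕜 (u a) (w a)) l (𝓝 0) := by
  refine squeeze_zero_norm (fun a => (norm_inner_le_norm (u a) (w a)).trans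
    (mul_le_mul_of_nonneg_right (hu a) (norm_nonneg _))) ?_
  simpa using hw.norm.const_mul C

end Normed

section ApproxEig

variable {E : Type*} [NormedAddCommGroup E] [InnerProductSpace ℂ E]

theorem approxEig_inv_norm_smul_apply_of_commute {T B : E →L[ℂ] E} {l : ℂ} {x : ℕ → E} {ε : ℝ}
    (hx : Tendsto (fun n => T (x n) - l • x n) atTop (𝓝 0)) (hTB : Commute T B)
    (hε : 0 < ε) (hBx : ∀ n, ε ≤ ‖B (x n)‖) :
    ApproxEig T l (fun n => ‖B (x n)‖⁻¹ • B (x n)) := by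
  refine ⟨fun n => norm_smul_inv_norm (𝕜 := ℝ) (norm_pos_iff.mp (hε.trans_le (hBx n))), ?_⟩
  have hBT : ∀ v, T (B v) = B (T v) := fun v => congr($(hTB.eq) v)
  have hB : Tendsto (fun n => B (T (x n) - l • x n)) atTop (𝓝 0) := by
    simpa only [Function.comp_def] using (B.continuous.tendsto' 0 0 (map_zero B)).comp hx
  refine (tendsto_inv_smul_zero_of_forall_le hε hBx hB).congr fun n => ?_
  simp only [map_sub, map_smul, map_smul_of_tower, hBT, smul_sub, smul_comm l]

end ApproxEig

section Krein

variable {E : Type*} [NormedAddCommGroup E] [InnerProductSpace ℂ E] [CompleteSpace E]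
  {J : E →L[ℂ] E}

theorem kadj_sub_smul_one (hJ2 : J ∘L J = 1) (T : E →L[ℂ] E) (c : ℂ) :
    kadj J (T - c • 1) = kadj J T - starRingEnd ℂ c • 1 := by
  change J * star (T - c • 1) * J = J * star T * J - star c • 1
  rw [star_sub, star_smul, star_one, mul_sub, sub_mul, mul_smul_comm, smul_mul_assoc, mul_one]
  exact congrArg (_ - star c • ·) hJ2

theorem inner_apply_kadj_apply (hJ2 : J ∘L J = 1) (T : E →L[ℂ] E) (v w : E) :
    inner ℂ (J (kadj J T v)) w = inner ℂ (J v) (T w) := by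
  have hJJ : ∀ u, J (J u) = u := fun u => congr($hJ2 u)
  simp only [kadj, comp_apply, hJJ, adjoint_inner_left]

theorem inner_kadj_apply_kadj_apply (hJ2 : J ∘L J = 1) {T : E →L[ℂ] E}
    (hT : Commute T (kadj J T)) (v : E) :
    inner ℂ (J (kadj J T v)) (kadj J T v) = inner ℂ (J v) (kadj J T (T v)) := by
  rw [inner_apply_kadj_apply hJ2]
  exact congrArg _ congr($(hT.eq) v)

end Krein

theorem approxEig_kreinAdjoint_of_posType_general (J N : H →L[ℂ] H)
    (hJ2 : J ∘L J = 1)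
    (hN : N ∘L kadj J N = kadj J N ∘L N)
    (l : ℂ) (hl : l ∈ posType J N)
    (x : ℕ → H) (hx : ApproxEig N l x) :
    Tendsto (fun n => kadj J N (x n) - (starRingEnd ℂ) l • x n) atTop (nhds 0) := by
  set A := N - l • (1 : H →L[ℂ] H)
  set B := kadj J A
  have hB : B = kadj J N - starRingEnd ℂ l • 1 := kadj_sub_smul_one hJ2 N l
  have hNB : Commute N B := hB ▸ (Commute.sub_right hN ((Commute.one_right N).smul_right _))
  have hAB : Commute A B := hNB.sub_left ((Commute.one_left B).smul_left l)
  have hAx : Tendsto (fun n => A (x n)) atTop (𝓝 0) := by simpa [A] using hx.2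
  suffices Tendsto (fun n => B (x n)) atTop (𝓝 0) by simpa [hB] using this
  by_contra hBx
  obtain ⟨ε, hε, φ, hφ, hle⟩ := exists_strictMono_le_norm_of_not_tendsto_zero hBx
  set z := fun k => ‖B (x (φ k))‖⁻¹ • B (x (φ k))
  have hz : ApproxEig N l z :=
    approxEig_inv_norm_smul_apply_of_commute (hx.2.comp hφ.tendsto_atTop) hNB hε hle
  have hBAx : Tendsto (fun k => inner ℂ (J (x (φ k))) (B (A (x (φ k))))) atTop (𝓝 0) :=
    tendsto_inner_zero_of_norm_le (C := ‖J‖) (fun k => by simpa [hx.1] using J.le_opNorm (x (φ k)))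
      ((B.continuous.tendsto' 0 0 (map_zero B)).comp (hAx.comp hφ.tendsto_atTop))
  have hBB : ∀ v, inner ℂ (J (B v)) (B v) = inner ℂ (J v) (B (A v)) :=
    inner_kadj_apply_kadj_apply hJ2 hAB
  have hzz : Tendsto (fun k => inner ℂ (J (z k)) (z k)) atTop (𝓝 0) := by
    refine (tendsto_inv_smul_zero_of_forall_le hε hle
      (tendsto_inv_smul_zero_of_forall_le hε hle hBAx)).congr fun k => ?_
    simp only [z, map_smul_of_tower, inner_smul_left_eq_smul, inner_smul_right_eq_smul, hBB]
  have hre : Tendsto (fun k => (inner ℂ (J (z k)) (z k)).re) atTop (𝓝 0) :=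
    (Complex.continuous_re.tendsto' 0 0 rfl).comp hzz
  exact (hre.liminf_eq ▸ hl.2 z hz).false

theorem approxEig_kreinAdjoint_of_posType (J N : H →L[ℂ] H)
    (hJ : ContinuousLinearMap.adjoint J = J) (hJ2 : J ∘L J = 1)
    (hN : N ∘L kadj J N = kadj J N ∘L N)
    (l : ℂ) (hl : l ∈ posType J N)
    (x : ℕ → H) (hx : ApproxEig N l x) :
    Tendsto (fun n => kadj J N (x n) - (starRingEnd ℂ) l • x n) atTop (nhds 0) :=
  approxEig_kreinAdjoint_of_posType_general J N hJ2 hN l hl x hx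
end
end

section
/- Let N be a bounded normal operator in a Krein space and λ ∈ σ₊(N). Then ker(N - λ) ⊆ ker(N⁺ - λ̄). -/
open Filter Topology ContinuousLinearMap

noncomputable section

variable {H : Type*} [NormedAddCommGroup H] [InnerProductSpace ℂ H] [CompleteSpace H]

/- `N⁺ - λ̄` maps every vector into the `[·,·]`-orthogonal complement of `ker (N - λ)`, and by
normality it maps `ker (N - λ)` into itself. Hence for an eigenvector `x`, `y = N⁺x - λ̄x` is an
eigenvector with `[y, y] = 0`; were `y ≠ 0`, the constant sequence `y / ‖y‖` would be an approximate
eigensequence contradicting positive type. -/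

theorem re_inner_J_self_pos_of_mem_posType {E : Type*} [NormedAddCommGroup E]
    [InnerProductSpace ℂ E] {J T : E →L[ℂ] E} {l : ℂ} (hl : l ∈ posType J T) {y : E} (hTy : T y = l • y) (hy : y ≠ 0) : 0 < (inner ℂ (J y) y : ℂ).re := by
  set c : ℂ := ((‖y‖⁻¹ : ℝ) : ℂ)
  have hu : ‖c • y‖ = 1 := by
    simp [c, norm_smul, norm_ne_zero_iff.mpr hy]
  have hTu : T (c • y) = l • (c • y) := by rw [map_smul, hTy, smul_comm]
  have happrox : ApproxEig T l (fun _ => c • y) :=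
    ⟨fun _ => hu, by simpa only [hTu, sub_self] using tendsto_const_nhds⟩
  have hpos := hl.2 _ happrox
  rw [liminf_const, map_smul, inner_smul_left, inner_smul_right, ← mul_assoc] at hpos
  have hc : (starRingEnd ℂ) c * c = ((‖y‖⁻¹ ^ 2 : ℝ) : ℂ) := by
    simp [c, Complex.conj_ofReal, sq]
  rw [hc, Complex.re_ofReal_mul] at hpos
  exact pos_of_mul_pos_right hpos (by positivity)

theorem inner_J_kadj_apply {J : H →L[ℂ] H} (hJ2 : J ∘L J = 1) (T : H →L[ℂ] H) (x z : H) :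
    inner ℂ (J (kadj J T x)) z = inner ℂ (J x) (T z) := by
  have hJJ : ∀ v, J (J v) = v := fun v => by simpa using ContinuousLinearMap.ext_iff.mp hJ2 v
  simp only [kadj, comp_apply, hJJ, adjoint_inner_left]

theorem inner_J_kadj_sub_conj_smul_eq_zero {J : H →L[ℂ] H} (hJ2 : J ∘L J = 1) (T : H →L[ℂ] H)
    {l : ℂ} (x : H) {z : H} (hTz : T z = l • z) :
    inner ℂ (J (kadj J T x - (starRingEnd ℂ) l • x)) z = 0 := by
  rw [map_sub, inner_sub_left, inner_J_kadj_apply hJ2, hTz, map_smul, inner_smul_left,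
    inner_smul_right, Complex.conj_conj, sub_self]

theorem ker_subset_ker_kreinAdjoint_general (J N : H →L[ℂ] H)
    (hJ2 : J ∘L J = 1)
    (hN : N ∘L kadj J N = kadj J N ∘L N)
    (l : ℂ) (hl : l ∈ posType J N) :
    ∀ x : H, N x = l • x → kadj J N x = (starRingEnd ℂ) l • x := by
  intro x hx
  set y := kadj J N x - (starRingEnd ℂ) l • x
  have hNy : N y = l • y := by
    have hcomm : N (kadj J N x) = kadj J N (N x) := congrArg (· x) hN
    simp only [y, map_sub, map_smul, hcomm, hx, smul_sub, smul_comm l]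
  by_contra hne
  have hpos := re_inner_J_self_pos_of_mem_posType hl hNy (sub_ne_zero.mpr hne)
  rw [inner_J_kadj_sub_conj_smul_eq_zero hJ2 N x hNy, Complex.zero_re] at hpos
  exact lt_irrefl 0 hpos

theorem ker_subset_ker_kreinAdjoint (J N : H →L[ℂ] H)
    (hJ : ContinuousLinearMap.adjoint J = J) (hJ2 : J ∘L J = 1)
    (hN : N ∘L kadj J N = kadj J N ∘L N)
    (l : ℂ) (hl : l ∈ posType J N) :
    ∀ x : H, N x = l • x → kadj J N x = (starRingEnd ℂ) l • x :=
  ker_subset_ker_kreinAdjoint_general J N hJ2 hN l hl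
end
end

section
/- Let N be a bounded normal operator in a Krein space and λ ∈ σ₊(N). Then λ has no Jordan chains of length greater than one: if (N - λ)x = 0 and (N - λ)u = x, then x = 0. Equivalently, the root subspace of N at λ equals ker(N - λ). -/
open Filter Topology ContinuousLinearMap

noncomputable section

variable {H : Type*} [NormedAddCommGroup H] [InnerProductSpace ℂ H] [CompleteSpace H]

/-! A bounded normal operator `N` in a Krein space commutes with its Krein adjoint `N⁺`, so `N⁺`
maps `ker (N - λ)` into itself. For an eigenvector `x`, the vector `v = N⁺ x - conj λ • x` is again
an eigenvector and `[v, v] = [v, (N⁺ - conj λ) x] = [(N - λ) v, x] = 0`. Eigenvectors at a point of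
positive type are positive, so `v = 0`, i.e. `N⁺ x = conj λ • x`. For a Jordan chain
`(N - λ) u = x` this gives `[x, x] = [(N - λ) u, x] = [u, (N⁺ - conj λ) x] = 0`, hence `x = 0`. -/

theorem inner_J_apply_eq_inner_J_kadj {J : H →L[ℂ] H} (hJ : adjoint J = J) (hJ2 : J ∘L J = 1)
    (T : H →L[ℂ] H) (a b : H) :
    inner ℂ (J (T a)) b = inner ℂ (J a) (kadj J T b) := by
  have hJJ : J (J a) = a := by simpa using congr($hJ2 a)
  calc inner ℂ (J (T a)) b
      = inner ℂ (T a) (J b) := by rw [← adjoint_inner_left, hJ]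
    _ = inner ℂ (J (J a)) (adjoint T (J b)) := by rw [hJJ, adjoint_inner_right]
    _ = inner ℂ (J a) (kadj J T b) := by
      simpa only [hJ, kadj, comp_apply] using adjoint_inner_left J (adjoint T (J b)) (J a)

theorem eq_zero_of_eigenvector_of_re_inner_J_self_nonpos {E : Type*} [NormedAddCommGroup E]
    [InnerProductSpace ℂ E] {J N : E →L[ℂ] E} {l : ℂ} (hl : l ∈ posType J N) {v : E}
    (hNv : N v = l • v) (hvv : (inner ℂ (J v) v).re ≤ 0) :
    v = 0 := by
  by_contra hv
  set c : ℂ := (‖v‖ : ℂ)⁻¹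
  have hunit : ApproxEig N l (fun _ => c • v) := by
    refine ⟨fun _ => norm_smul_inv_norm hv, ?_⟩
    simp only [map_smul, hNv, smul_comm c l, sub_self, tendsto_const_nhds]
  have hpos : 0 < (inner ℂ (J (c • v)) (c • v)).re := by
    simpa only [liminf_const] using hl.2 _ hunit
  have hscale : inner ℂ (J (c • v)) (c • v) = ((‖v‖⁻¹ ^ 2 : ℝ) : ℂ) * inner ℂ (J v) v := by
    rw [map_smul, inner_smul_left, inner_smul_right, ← mul_assoc]
    simp [c, Complex.conj_ofReal, sq]
  rw [hscale, Complex.re_ofReal_mul] at hpos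
  exact (pos_of_mul_pos_right hpos (by positivity)).not_ge hvv

theorem kadj_apply_eq_conj_smul_of_eigenvector {J N : H →L[ℂ] H} (hJ : adjoint J = J)
    (hJ2 : J ∘L J = 1) (hN : N ∘L kadj J N = kadj J N ∘L N) {l : ℂ} (hl : l ∈ posType J N)
    {x : H} (hNx : N x = l • x) :
    kadj J N x = starRingEnd ℂ l • x := by
  set v := kadj J N x - starRingEnd ℂ l • x
  have hNv : N v = l • v := by
    have hcomm : N (kadj J N x) = kadj J N (N x) := congr($hN x)
    rw [map_sub, hcomm, hNx, map_smul, map_smul, hNx, smul_sub, smul_comm]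
  have hvv : inner ℂ (J v) v = 0 := by
    have hvM : inner ℂ (J v) (kadj J N x) = starRingEnd ℂ l * inner ℂ (J v) x := by
      rw [← inner_J_apply_eq_inner_J_kadj hJ hJ2, hNv, map_smul, inner_smul_left]
    conv_lhs => rw [inner_sub_right, hvM, inner_smul_right, sub_self]
  exact sub_eq_zero.1 <|
    eq_zero_of_eigenvector_of_re_inner_J_self_nonpos hl hNv (by rw [hvv, Complex.zero_re])

theorem no_jordan_chain_of_posType (J N : H →L[ℂ] H)
    (hJ : ContinuousLinearMap.adjoint J = J) (hJ2 : J ∘L J = 1)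
    (hN : N ∘L kadj J N = kadj J N ∘L N)
    (l : ℂ) (hl : l ∈ posType J N) :
    ∀ x u : H, N x = l • x → N u - l • u = x → x = 0 := by
  intro x u hx hu
  have hMx := kadj_apply_eq_conj_smul_of_eigenvector hJ hJ2 hN hl hx
  have hxx : inner ℂ (J x) x = 0 := by
    calc inner ℂ (J x) x
        = inner ℂ (J (N u)) x - starRingEnd ℂ l * inner ℂ (J u) x := by
          rw [← hu, map_sub, inner_sub_left, map_smul, inner_smul_left]
      _ = 0 := by
          rw [inner_J_apply_eq_inner_J_kadj hJ hJ2, hMx, inner_smul_right, sub_self]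
  exact eq_zero_of_eigenvector_of_re_inner_J_self_nonpos hl hx (by rw [hxx, Complex.zero_re])
end
end

section
/- Rosenblum's Corollary: Let X, Y be complex Banach spaces, S a bounded operator on X and T a bounded operator on Y with σ(S) ∩ σ(T) = ∅. Then for every bounded operator Z : Y → X there is a unique bounded X-valued solution of SX₀ - X₀T = Z; in particular, if a bounded operator W : Y → X satisfies SW = WT, then W = 0. -/
/-!
The Sylvester operator `W ↦ S W - W T` on `Y →L[ℂ] X` is `L_S - R_T`, the difference of left
multiplication by `S` and right multiplication by `T`. These are commuting elements of a complex
Banach algebra, and being images of `S` and `T` under algebra homomorphisms (from the opposite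
algebra, for `R`), they satisfy `σ(L_S) ⊆ σ(S)` and `σ(R_T) ⊆ σ(T)`. For commuting `a`, `b`,
Gelfand theory in the bicommutant of `{a, b}` (a closed commutative subalgebra, inverse-closed, so
spectra do not change in it) gives `σ(a - b) ⊆ σ(a) - σ(b)`. Disjointness of the spectra thus puts
`0` outside `σ(L_S - R_T)`, so the Sylvester operator is invertible.
-/

namespace Subalgebra

theorem isUnit_centralizer_iff {R A : Type*} [CommSemiring R] [Semiring A] [Algebra R A]
    {s : Set A} {x : centralizer R s} :
    IsUnit x ↔ IsUnit (x : A) := by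
  refine ⟨fun hx ↦ hx.map (centralizer R s).val, fun ⟨u, hu⟩ ↦ ?_⟩
  have hu_inv : (↑u⁻¹ : A) ∈ centralizer R s := fun c hc ↦
    (Commute.units_inv_right (hu ▸ x.2 c hc : Commute c u)).eq
  exact ⟨⟨x, ⟨_, hu_inv⟩, Subtype.ext (by simp [← hu]), Subtype.ext (by simp [← hu])⟩, rfl⟩

theorem spectrum_centralizer_eq {R A : Type*} [CommRing R] [Ring A] [Algebra R A] {s : Set A}
    (x : centralizer R s) :
    spectrum R x = spectrum R (x : A) := by
  refine subset_antisymm (Set.compl_subset_compl.mpr fun z hz ↦ ?_) (spectrum.subset_subalgebra x)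
  rw [spectrum.mem_resolventSet_iff] at hz ⊢
  rw [isUnit_centralizer_iff]
  simpa using hz

end Subalgebra

theorem spectrum_op {R A : Type*} [CommSemiring R] [Ring A] [Algebra R A] (a : A) :
    spectrum R (MulOpposite.op a) = spectrum R a := by
  ext z
  simp [spectrum.mem_iff, MulOpposite.algebraMap_apply, ← MulOpposite.op_sub]

open scoped Pointwise in
theorem Commute.spectrum_sub_subset {A : Type*} [NormedRing A] [NormedAlgebra ℂ A]
    [CompleteSpace A] {a b : A} (hab : Commute a b) :
    spectrum ℂ (a - b) ⊆ spectrum ℂ a - spectrum ℂ b := by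
  intro z hz
  let B := Subalgebra.centralizer ℂ (Subalgebra.centralizer ℂ {a, b} : Set A)
  have hB_comm : ∀ x y : B, x * y = y * x := fun x y ↦ Subtype.ext <|
    Set.centralizer_centralizer_comm_of_comm (by
      rintro x (rfl | rfl) y (rfl | rfl) <;> first | rfl | exact hab.eq | exact hab.eq.symm)
      _ x.2 _ y.2
  let _ : NormedCommRing B := { (inferInstance : NormedRing B) with mul_comm := hB_comm }
  have : CompleteSpace B := (Set.isClosed_centralizer _).completeSpace_coe
  let a' : B := ⟨a, Set.subset_centralizer_centralizer (by simp)⟩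
  let b' : B := ⟨b, Set.subset_centralizer_centralizer (by simp)⟩
  have hz' : z ∈ spectrum ℂ (a' - b') := by rw [Subalgebra.spectrum_centralizer_eq]; exact hz
  obtain ⟨φ, hφ⟩ := WeakDual.CharacterSpace.exists_apply_eq_zero hz'
  refine ⟨φ a', ?_, φ b', ?_, ?_⟩
  · exact Subalgebra.spectrum_centralizer_eq a' ▸ AlgHom.apply_mem_spectrum φ a'
  · exact Subalgebra.spectrum_centralizer_eq b' ▸ AlgHom.apply_mem_spectrum φ b'
  · simp only [map_sub, AlgHomClass.commutes, Algebra.algebraMap_self, RingHom.id_apply] at hφ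
    linear_combination -hφ

theorem Commute.isUnit_sub_of_disjoint_spectrum {A : Type*} [NormedRing A] [NormedAlgebra ℂ A]
    [CompleteSpace A] {a b : A} (hab : Commute a b)
    (h : Disjoint (spectrum ℂ a) (spectrum ℂ b)) : IsUnit (a - b) := by
  rw [← spectrum.zero_notMem_iff ℂ]
  intro h0
  obtain ⟨x, hx, y, hy, hxy⟩ := hab.spectrum_sub_subset h0
  exact h.ne_of_mem hx hy (sub_eq_zero.mp hxy)

namespace ContinuousLinearMap

section

variable {𝕜 X Y : Type*} [NontriviallyNormedField 𝕜] [NormedAddCommGroup X] [NormedSpace 𝕜 X]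
  [NormedAddCommGroup Y] [NormedSpace 𝕜 Y]

variable (𝕜 Y) in
noncomputable def compLeftAlgHom : (X →L[𝕜] X) →ₐ[𝕜] (Y →L[𝕜] X) →L[𝕜] Y →L[𝕜] X :=
  .ofLinearMap (compL 𝕜 Y X X).toLinearMap (by ext; rfl) fun _ _ ↦ by ext; rfl

variable (𝕜 X) in
noncomputable def compRightAlgHom : (Y →L[𝕜] Y)ᵐᵒᵖ →ₐ[𝕜] (Y →L[𝕜] X) →L[𝕜] Y →L[𝕜] X :=
  .ofLinearMap ((compL 𝕜 Y Y X).flip.toLinearMap ∘ₗ (MulOpposite.opLinearEquiv 𝕜).symm.toLinearMap)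
    (by ext; rfl) fun _ _ ↦ by ext; rfl

theorem commute_compLeftAlgHom_compRightAlgHom (S : X →L[𝕜] X) (T : (Y →L[𝕜] Y)ᵐᵒᵖ) :
    Commute (compLeftAlgHom 𝕜 Y S) (compRightAlgHom 𝕜 X T) := by
  ext; rfl

end

theorem bijective_comp_sub_comp_of_disjoint_spectrum {X Y : Type*} [NormedAddCommGroup X]
    [NormedSpace ℂ X] [CompleteSpace X] [NormedAddCommGroup Y] [NormedSpace ℂ Y] {S : X →L[ℂ] X}
    {T : Y →L[ℂ] Y} (h : Disjoint (spectrum ℂ S) (spectrum ℂ T)) :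
    Function.Bijective fun W : Y →L[ℂ] X ↦ S ∘L W - W ∘L T := by
  have hL := AlgHom.spectrum_apply_subset (compLeftAlgHom ℂ Y) S
  have hR : spectrum ℂ (compRightAlgHom ℂ X (.op T)) ⊆ spectrum ℂ T :=
    (AlgHom.spectrum_apply_subset _ _).trans (spectrum_op T).subset
  -- naming `A` up front avoids a very slow unification of the normed-algebra instances
  have hunit := Commute.isUnit_sub_of_disjoint_spectrum (A := (Y →L[ℂ] X) →L[ℂ] Y →L[ℂ] X)
    (commute_compLeftAlgHom_compRightAlgHom S (.op T)) (h.mono hL hR)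
  exact isUnit_iff_bijective.mp hunit

end ContinuousLinearMap

theorem rosenblum_corollary_general
    {X Y : Type*} [NormedAddCommGroup X] [NormedSpace ℂ X] [CompleteSpace X]
    [NormedAddCommGroup Y] [NormedSpace ℂ Y]
    (S : X →L[ℂ] X) (T : Y →L[ℂ] Y)
    (h : Disjoint (spectrum ℂ S) (spectrum ℂ T)) :
    (∀ Z : Y →L[ℂ] X, ∃! X₀ : Y →L[ℂ] X, S ∘L X₀ - X₀ ∘L T = Z) ∧
      ∀ W : Y →L[ℂ] X, S ∘L W = W ∘L T → W = 0 := by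
  have hbij := ContinuousLinearMap.bijective_comp_sub_comp_of_disjoint_spectrum h
  exact ⟨hbij.existsUnique, fun W hW ↦ hbij.injective (by simp [hW])⟩

theorem rosenblum_corollary
    {X Y : Type*} [NormedAddCommGroup X] [NormedSpace ℂ X] [CompleteSpace X]
    [NormedAddCommGroup Y] [NormedSpace ℂ Y] [CompleteSpace Y]
    (S : X →L[ℂ] X) (T : Y →L[ℂ] Y)
    (h : Disjoint (spectrum ℂ S) (spectrum ℂ T)) :
    (∀ Z : Y →L[ℂ] X, ∃! X₀ : Y →L[ℂ] X, S ∘L X₀ - X₀ ∘L T = Z) ∧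
      ∀ W : Y →L[ℂ] X, S ∘L W = W ∘L T → W = 0 :=
  rosenblum_corollary_general S T h
end
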